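/- arXiv:1708.00610 — 2 statements merged into one kernel-verified Lean document; each statement's English description precedes it below -/
import Mathlib

section
/- The H-orbits on X = (ℂⁿ∖{0})/ℝ^× are exactly the n sets Y_{2j−1} := {[z] : z_{j+1}=⋯=z_n=0, z_j ≠ 0} for j ∈ {1,...,n}; in particular the number of H-orbits on X is exactly n, hence finite. -/
noncomputable section
open Complex

abbrev Reps : Type := ℂ × ℂ

def act (x : Reps) (z : ℂ) : ℂ := x.1 * z + x.2 * (starRingEnd ℂ) z

def Mact {n : ℕ} (A : Matrix (Fin n) (Fin n) Reps) (v : Fin n → ℂ) : Fin n → ℂ :=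
  fun i => ∑ k : Fin n, act (A i k) (v k)

def epsPow (a : ℂ) (m : ℕ) : Reps := if m % 2 = 0 then (a, 0) else (0, a)

def hmat (n : ℕ) (θ : ℝ) (a : ℕ → ℂ) : Matrix (Fin n) (Fin n) Reps :=
  fun i j =>
    if i = j then (Complex.exp (θ * I), 0)
    else if (i : ℕ) < (j : ℕ) then epsPow (a ((j : ℕ) - (i : ℕ))) ((j : ℕ) - (i : ℕ))
    else 0

def Hset (n : ℕ) : Set (Matrix (Fin n) (Fin n) Reps) :=
  {A | ∃ (θ : ℝ) (a : ℕ → ℂ), A = hmat n θ a}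

/-- z represents a point of Y_{2j−1}: z_j ≠ 0 and z_k = 0 for k > j -/
def inY {n : ℕ} (j : Fin n) (z : Fin n → ℂ) : Prop :=
  z j ≠ 0 ∧ ∀ k : Fin n, j < k → z k = 0

/-! Every element of `H` is upper triangular with unimodular diagonal, so it preserves the index
`j` of the last nonzero coordinate of `z` and multiplies `z_j` by `e^{iθ}`: an orbit stays
inside one `Y_{2j−1}`. Conversely, if `z` and `w` both have last nonzero coordinate `j`, pick
`θ` and `t > 0` with `e^{iθ} z_j = t w_j`. Row `j − m` of `A z = t w` then involves only
`a_1, …, a_m`, and `a_m` with the coefficient `conj^m (z_j) ≠ 0`, so the rows `j − 1, …, 0`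
determine `a_1, …, a_j` recursively. -/

def conjPow (m : ℕ) (x : ℂ) : ℂ := if m % 2 = 0 then x else starRingEnd ℂ x

@[simp]
lemma conjPow_zero (m : ℕ) : conjPow m 0 = 0 := by
  unfold conjPow; split_ifs <;> simp

lemma conjPow_ne_zero {x : ℂ} (m : ℕ) (hx : x ≠ 0) : conjPow m x ≠ 0 := by
  unfold conjPow; split_ifs <;> simpa using hx

lemma act_epsPow (a : ℂ) (m : ℕ) (x : ℂ) : act (epsPow a m) x = a * conjPow m x := by
  unfold act epsPow conjPow; split_ifs <;> simp

def natExtend {n : ℕ} (z : Fin n → ℂ) (k : ℕ) : ℂ := if h : k < n then z ⟨k, h⟩ else 0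

@[simp]
lemma natExtend_coe {n : ℕ} (z : Fin n → ℂ) (k : Fin n) : natExtend z k = z k := by
  simp [natExtend]

lemma inY.natExtend_eq_zero {n : ℕ} {j : Fin n} {z : Fin n → ℂ} (hz : inY j z) {k : ℕ}
    (hk : (j : ℕ) < k) : natExtend z k = 0 := by
  unfold natExtend
  split_ifs with h
  · exact hz.2 ⟨k, h⟩ hk
  · rfl

lemma act_hmat_apply {n : ℕ} (θ : ℝ) (a : ℕ → ℂ) (i k : Fin n) (x : ℂ) :
    act (hmat n θ a i k) x =
      if (i : ℕ) = k then Complex.exp (θ * I) * x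
      else if (i : ℕ) < k then a (k - i) * conjPow (k - i) x else 0 := by
  simp only [hmat, Fin.val_inj]
  split_ifs
  · simp [act]
  · exact act_epsPow _ _ x
  · simp [act]

lemma Mact_hmat_apply {n : ℕ} (θ : ℝ) (a : ℕ → ℂ) (z : Fin n → ℂ) (i : Fin n) :
    Mact (hmat n θ a) z i = Complex.exp (θ * I) * z i +
      ∑ l ∈ Finset.Ico 1 (n - i), a l * conjPow l (natExtend z (i + l)) := by
  set f : ℕ → ℂ := fun k => if (i : ℕ) = k then Complex.exp (θ * I) * natExtend z k
      else if (i : ℕ) < k then a (k - i) * conjPow (k - i) (natExtend z k) else 0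
  have hsum : Mact (hmat n θ a) z i = ∑ k ∈ Finset.range n, f k := by
    simp only [Mact, act_hmat_apply, ← natExtend_coe z]
    exact Fin.sum_univ_eq_sum_range f n
  have hlow : ∑ k ∈ Finset.range i, f k = 0 :=
    Finset.sum_eq_zero fun k hk => by
      have hki := Finset.mem_range.mp hk
      simp [f, hki.ne', hki.not_gt]
  have hn : Finset.range n = Finset.range (i + (n - i)) := by rw [Nat.add_sub_cancel' i.isLt.le]
  rw [hsum, hn, Finset.sum_range_add, hlow, zero_add, Finset.range_eq_Ico,
    Finset.sum_eq_sum_Ico_succ_bot (by omega)]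
  congr 1
  · simp [f]
  · refine Finset.sum_congr rfl fun l hl => ?_
    have hl1 : 1 ≤ l := (Finset.mem_Ico.mp hl).1
    simp [f, show l ≠ 0 by omega, show 0 < l by omega]

lemma inY.Mact_hmat_apply {n : ℕ} {j : Fin n} {z : Fin n → ℂ} (hz : inY j z) (θ : ℝ)
    (a : ℕ → ℂ) (i : Fin n) :
    Mact (hmat n θ a) z i = Complex.exp (θ * I) * z i +
      ∑ l ∈ Finset.Ico 1 ((j : ℕ) + 1 - i), a l * conjPow l (natExtend z (i + l)) := by
  rw [_root_.Mact_hmat_apply]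
  congr 1
  have hjn : (j : ℕ) + 1 - i ≤ n - i := by omega
  refine (Finset.sum_subset (Finset.Ico_subset_Ico_right hjn) fun l hl hl' => ?_).symm
  simp only [Finset.mem_Ico] at hl hl'
  rw [hz.natExtend_eq_zero (by omega), conjPow_zero, mul_zero]

lemma exists_inY {n : ℕ} {z : Fin n → ℂ} (hz : z ≠ 0) : ∃ j : Fin n, inY j z := by
  classical
  have hsupp : (Finset.univ.filter fun k => z k ≠ 0).Nonempty := by
    obtain ⟨k, hk⟩ := Function.ne_iff.mp hz
    exact ⟨k, by simpa using hk⟩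
  refine ⟨_, (Finset.mem_filter.mp (Finset.max'_mem _ hsupp)).2, fun k hk => ?_⟩
  by_contra hzk
  exact hk.not_ge (Finset.le_max' _ k (by simpa using hzk))

lemma inY.of_Mact_hmat_eq_smul {n : ℕ} {j : Fin n} {z w : Fin n → ℂ} (hz : inY j z) {θ : ℝ}
    {a : ℕ → ℂ} {t : ℝ} (ht : t ≠ 0) (h : Mact (hmat n θ a) z = t • w) : inY j w := by
  have hrow : ∀ i : Fin n, j ≤ i → Complex.exp (θ * I) * z i = t * w i := fun i hi => by
    have := congrFun h i
    rwa [hz.Mact_hmat_apply, Finset.Ico_eq_empty (by omega), Finset.sum_empty, add_zero] at this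
  refine ⟨fun hw => ?_, fun k hk => ?_⟩
  · have := hrow j le_rfl
    rw [hw, mul_zero] at this
    exact mul_ne_zero (Complex.exp_ne_zero _) hz.1 this
  · have := hrow k hk.le
    rw [hz.2 k hk, mul_zero, eq_comm] at this
    exact (mul_eq_zero.mp this).resolve_left (Complex.ofReal_ne_zero.mpr ht)

lemma exists_exp_mul_eq_real_mul {z w : ℂ} (hz : z ≠ 0) (hw : w ≠ 0) :
    ∃ θ t : ℝ, 0 < t ∧ Complex.exp (θ * I) * z = t * w := by
  refine ⟨Complex.arg (w / z), ‖z‖ / ‖w‖, by positivity, ?_⟩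
  have hnorm : (‖w / z‖ : ℂ) ≠ 0 := by simp [hz, hw]
  have hphase : Complex.exp ((w / z).arg * I) = w / z / ‖w / z‖ := by
    rw [eq_div_iff hnorm, mul_comm]
    exact Complex.norm_mul_exp_arg_mul_I (w / z)
  rw [hphase, norm_div]
  have hz' : (‖z‖ : ℂ) ≠ 0 := by simpa using hz
  have hw' : (‖w‖ : ℂ) ≠ 0 := by simpa using hw
  push_cast
  field_simp

def transportCoeff (j : ℕ) (Z W : ℕ → ℂ) (t E : ℂ) : ℕ → ℂ
  | m => (t * W (j - m) - E * Z (j - m) -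
      ∑ l ∈ (Finset.Ico 1 m).attach, transportCoeff j Z W t E l * conjPow l (Z (j - m + l))) /
      conjPow m (Z j)
termination_by m => m
decreasing_by exact (Finset.mem_Ico.mp l.2).2

lemma sum_transportCoeff {j : ℕ} {Z W : ℕ → ℂ} {t E : ℂ} (hZ : Z j ≠ 0)
    (hE : E * Z j = t * W j) {m : ℕ} (hm : m ≤ j) :
    ∑ l ∈ Finset.Ico 1 (m + 1), transportCoeff j Z W t E l * conjPow l (Z (j - m + l)) =
      t * W (j - m) - E * Z (j - m) := by
  rcases Nat.eq_zero_or_pos m with rfl | hm0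
  · simp [hE]
  rw [Finset.sum_Ico_succ_top hm0, Nat.sub_add_cancel hm, transportCoeff,
    div_mul_cancel₀ _ (conjPow_ne_zero m hZ), Finset.sum_attach (Finset.Ico 1 m)
      (fun l => transportCoeff j Z W t E l * conjPow l (Z (j - m + l)))]
  ring

lemma exists_Mact_hmat_eq_smul {n : ℕ} {j : Fin n} {z w : Fin n → ℂ} (hz : inY j z)
    (hw : inY j w) : ∃ (θ : ℝ) (a : ℕ → ℂ) (t : ℝ), t ≠ 0 ∧ Mact (hmat n θ a) z = t • w := by
  obtain ⟨θ, t, ht, hphase⟩ := exists_exp_mul_eq_real_mul hz.1 hw.1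
  refine ⟨θ, transportCoeff j (natExtend z) (natExtend w) t (Complex.exp (θ * I)), t, ht.ne',
    funext fun i => ?_⟩
  rw [hz.Mact_hmat_apply, Pi.smul_apply, Complex.real_smul]
  rcases le_or_gt (i : ℕ) j with hij | hij
  · have hsum := sum_transportCoeff (Z := natExtend z) (W := natExtend w) (t := t)
      (by simpa using hz.1) (by simpa using hphase) (Nat.sub_le j i)
    rw [Nat.sub_sub_self hij, natExtend_coe, natExtend_coe] at hsum
    rw [Nat.sub_add_comm hij, hsum]
    ring
  · rw [Finset.Ico_eq_empty (by omega), Finset.sum_empty, hz.2 i hij, hw.2 i hij]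
    simp

lemma inY_single {n : ℕ} (j : Fin n) : inY j (Pi.single j 1) :=
  ⟨by simp, fun _ hk => Pi.single_eq_of_ne hk.ne' 1⟩

/-- The H-orbits on X = (ℂⁿ∖{0})/ℝ^× are exactly the n sets Y₁, Y₃, …, Y_{2n−1}:
two nonzero vectors lie in the same H-orbit modulo ℝ^× iff they lie in a common
Y_{2j−1}, and each Y_{2j−1} is nonempty; in particular there are exactly n orbits. -/
theorem stmt12 (n : ℕ) :
    (∀ z w : Fin n → ℂ, z ≠ 0 → w ≠ 0 →
      ((∃ A ∈ Hset n, ∃ t : ℝ, t ≠ 0 ∧ Mact A z = t • w) ↔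
        ∃ j : Fin n, inY j z ∧ inY j w)) ∧
    (∀ j : Fin n, ∃ z : Fin n → ℂ, inY j z) := by
  refine ⟨fun z w hz _ => ⟨?_, ?_⟩, fun j => ⟨_, inY_single j⟩⟩
  · rintro ⟨_, ⟨θ, a, rfl⟩, t, ht, h⟩
    obtain ⟨j, hj⟩ := exists_inY hz
    exact ⟨j, hj, hj.of_Mact_hmat_eq_smul ht h⟩
  · rintro ⟨j, hzj, hwj⟩
    obtain ⟨θ, a, t, ht, h⟩ := exists_Mact_hmat_eq_smul hzj hwj
    exact ⟨_, ⟨θ, a, rfl⟩, t, ht, h⟩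
end
end

section
/- Let n = 2 and D' := z₁ ∂/∂z₂ on ℂ² ≅ ℝ⁴. For a ∈ ℂ, let h₁(a) act on ℂ² by (z₁, z₂) ↦ (z₁ + a·conj(z₂), z₂). Then the pushforward of D' under h₁(a) equals D' + conj(a)(z₁ − a·conj(z₂)) ∂/∂conj(z₁) − a·conj(z₂) ∂/∂z₂. -/
noncomputable section
open Complex

/-- the Wirtinger derivative ∂f/∂z_j on ℂⁿ ≅ ℝ^{2n} -/
def pz (n : ℕ) (j : Fin n) (f : (Fin n → ℂ) → ℂ) (z : Fin n → ℂ) : ℂ :=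
  (fderiv ℝ f z (Pi.single j 1) - I * fderiv ℝ f z (Pi.single j I)) / 2

/-- the Wirtinger derivative ∂f/∂conj(z_j) on ℂⁿ ≅ ℝ^{2n} -/
def pzbar (n : ℕ) (j : Fin n) (f : (Fin n → ℂ) → ℂ) (z : Fin n → ℂ) : ℂ :=
  (fderiv ℝ f z (Pi.single j 1) + I * fderiv ℝ f z (Pi.single j I)) / 2

/-- h₁(a) : ℂ² → ℂ², (z₁, z₂) ↦ (z₁ + a·conj z₂, z₂) -/
def h1map2 (a : ℂ) (z : Fin 2 → ℂ) : Fin 2 → ℂ :=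
  ![z 0 + a * (starRingEnd ℂ) (z 1), z 1]

def h1clm (a : ℂ) : (Fin 2 → ℂ) →L[ℝ] (Fin 2 → ℂ) :=
  ContinuousLinearMap.pi
    ![(ContinuousLinearMap.proj (R := ℝ) (φ := fun _ : Fin 2 => ℂ) 0 +
        a • ((conjCLE : ℂ ≃L[ℝ] ℂ).toContinuousLinearMap.comp
          (ContinuousLinearMap.proj (R := ℝ) (φ := fun _ : Fin 2 => ℂ) 1)) :
        (Fin 2 → ℂ) →L[ℝ] ℂ),
      ContinuousLinearMap.proj (R := ℝ) (φ := fun _ : Fin 2 => ℂ) 1]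

lemma h1clm_apply (a : ℂ) : ⇑(h1clm a) = h1map2 a := by
  funext z
  funext i
  fin_cases i <;>
    simp [h1clm, h1map2, ContinuousLinearMap.pi_apply]

/-- For D' = z₁ ∂/∂z₂ on ℂ² ≅ ℝ⁴, the pushforward of D' under h₁(a) equals
D' + conj(a)(z₁ − a conj z₂) ∂/∂conj(z₁) − a conj(z₂) ∂/∂z₂.  Equivalently (avoiding
inverses): D'(f ∘ h₁(a)) at w equals the claimed operator applied to f at h₁(a)(w). -/
theorem stmt14 (a : ℂ) (f : (Fin 2 → ℂ) → ℂ) (hf : ContDiff ℝ (⊤ : ℕ∞) f) (w : Fin 2 → ℂ) :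
    w 0 * pz 2 1 (f ∘ h1map2 a) w =
      (h1map2 a w 0) * pz 2 1 f (h1map2 a w) +
      (starRingEnd ℂ) a * (h1map2 a w 0 - a * (starRingEnd ℂ) (h1map2 a w 1)) *
        pzbar 2 0 f (h1map2 a w) -
      a * (starRingEnd ℂ) (h1map2 a w 1) * pz 2 1 f (h1map2 a w) := by
  have hdf : Differentiable ℝ f := hf.differentiable (by simp)
  have hh : h1map2 a = ⇑(h1clm a) := (h1clm_apply a).symm
  have hcomp : fderiv ℝ (f ∘ h1map2 a) w
      = (fderiv ℝ f (h1map2 a w)).comp (h1clm a) := by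
    rw [hh]
    rw [fderiv_comp w (hdf _) (h1clm a).differentiableAt, (h1clm a).fderiv]
  set L := fderiv ℝ f (h1map2 a w) with hL
  have h1 : (h1clm a) (Pi.single 1 (1:ℂ))
      = a.re • (Pi.single 0 1 : Fin 2 → ℂ) + a.im • (Pi.single 0 I : Fin 2 → ℂ) + Pi.single 1 1 := by
    funext i
    rw [h1clm_apply]
    fin_cases i <;>
      simp [h1map2, Complex.real_smul, Pi.single_apply]
  have h2 : (h1clm a) (Pi.single 1 (I:ℂ))
      = a.im • (Pi.single 0 1 : Fin 2 → ℂ) - a.re • (Pi.single 0 I : Fin 2 → ℂ) + Pi.single 1 I := by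
    funext i
    rw [h1clm_apply]
    fin_cases i <;>
      simp [h1map2, Complex.real_smul, Pi.single_apply, Complex.ext_iff]
  have e1 : fderiv ℝ (f ∘ h1map2 a) w (Pi.single 1 1)
      = a.re • L (Pi.single 0 1) + a.im • L (Pi.single 0 I) + L (Pi.single 1 1) := by
    rw [hcomp]; simp [h1]
  have e2 : fderiv ℝ (f ∘ h1map2 a) w (Pi.single 1 I)
      = a.im • L (Pi.single 0 1) - a.re • L (Pi.single 0 I) + L (Pi.single 1 I) := by
    rw [hcomp]; simp [h2]
  have hca : (starRingEnd ℂ) a = (a.re : ℂ) - a.im * I := by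
    simp [Complex.ext_iff]
  have hw0 : h1map2 a w 0 = w 0 + a * (starRingEnd ℂ) (w 1) := rfl
  have hw1 : h1map2 a w 1 = w 1 := rfl
  simp only [pz, pzbar, e1, e2, Complex.real_smul, hw0, hw1, hca]
  linear_combination (w 0 * (a.im : ℂ) * L (Pi.single 0 I) / 2) * Complex.I_sq
end
end
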